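/- arXiv:2104.13606 — 2 statements merged into one kernel-verified Lean document; each statement's English description precedes it below -/
import Mathlib

section
/- Let Λ: [τ,∞) → ℝ be continuous and suppose there exist ε > 0, locally integrable nonnegative functions q₁, q₂ on [τ,∞), and constants c₁, c₂ ≥ 0 such that for all b > a ≥ τ: Λ(b) + 2ε∫ₐᵇ Λ(y) dy ≤ Λ(a) + ∫ₐᵇ q₁(y)Λ(y) dy + ∫ₐᵇ q₂(y) dy, with ∫ₐᵇ q₁(y) dy ≤ ε(b−a) + c₁ for all b > a ≥ τ and sup_{t ≥ τ} ∫ₜ^{t+1} q₂(y) dy ≤ c₂. Then Λ(t) ≤ e^{c₁}[|Λ(τ)| e^{−ε(t−τ)} + c₂ e^{ε}/(1 − e^{−ε})] for all t ≥ τ. -/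
open MeasureTheory intervalIntegral Real

lemma discrete_gronwall_aux (x p q : ℕ → ℝ) :
    ∀ n : ℕ, (∀ i < n, 0 ≤ p i) → (∀ i < n, x (i+1) ≤ p i * x i + q i) →
    x n ≤ (∏ i ∈ Finset.range n, p i) * x 0 +
      ∑ i ∈ Finset.range n, (∏ j ∈ Finset.Ico (i+1) n, p j) * q i := by
  intro n
  induction n with
  | zero => simp
  | succ n ih =>
    intro hp hx
    have h1 := ih (fun i hi => hp i (Nat.lt_succ_of_lt hi)) (fun i hi => hx i (Nat.lt_succ_of_lt hi))
    have h2 := hx n (Nat.lt_succ_self n)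
    have hpn : 0 ≤ p n := hp n (Nat.lt_succ_self n)
    have key : ∀ i ∈ Finset.range n,
        (∏ j ∈ Finset.Ico (i+1) (n+1), p j) * q i
          = p n * ((∏ j ∈ Finset.Ico (i+1) n, p j) * q i) := by
      intro i hi
      rw [Finset.prod_Ico_succ_top (Finset.mem_range.mp hi)]
      ring
    calc x (n+1) ≤ p n * x n + q n := h2
      _ ≤ p n * ((∏ i ∈ Finset.range n, p i) * x 0 +
            ∑ i ∈ Finset.range n, (∏ j ∈ Finset.Ico (i+1) n, p j) * q i) + q n := by
          nlinarith [mul_le_mul_of_nonneg_left h1 hpn]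
      _ = (∏ i ∈ Finset.range (n+1), p i) * x 0 +
            ∑ i ∈ Finset.range (n+1), (∏ j ∈ Finset.Ico (i+1) (n+1), p j) * q i := by
          rw [Finset.prod_range_succ, Finset.sum_range_succ, Finset.sum_congr rfl key,
            ← Finset.mul_sum, Finset.Ico_self, Finset.prod_empty]
          ring

lemma decay_integral_bound (τ ε : ℝ) (hε : 0 < ε) (q₂ : ℝ → ℝ)
    (hq₂nonneg : ∀ y, τ ≤ y → 0 ≤ q₂ y)
    (hq₂int : ∀ a b : ℝ, τ ≤ a → a ≤ b → IntervalIntegrable q₂ volume a b)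
    (c₂ : ℝ) (hc₂ : 0 ≤ c₂)
    (hq₂bound : ∀ t : ℝ, τ ≤ t → (∫ y in t..(t+1), q₂ y) ≤ c₂) :
    ∀ n : ℕ, ∀ a b : ℝ, τ ≤ a → a ≤ b → b - a ≤ n →
      (∫ s in a..b, q₂ s * Real.exp (-ε * (b - s))) ≤ c₂ / (1 - Real.exp (-ε)) := by
  have he1 : Real.exp (-ε) < 1 := by
    rw [Real.exp_lt_one_iff]; linarith
  have he0 : 0 < Real.exp (-ε) := Real.exp_pos _
  have hd : 0 < 1 - Real.exp (-ε) := by linarith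
  have hcd : 0 ≤ c₂ / (1 - Real.exp (-ε)) := div_nonneg hc₂ hd.le
  have hcont : ∀ b : ℝ, Continuous fun s : ℝ => Real.exp (-ε * (b - s)) := by
    intro b; fun_prop
  intro n
  induction n with
  | zero =>
    intro a b hτa hab hle
    have : b = a := le_antisymm (by norm_num at hle; linarith) hab
    subst this
    simp [hcd]
  | succ n ih =>
    intro a b hτa hab hle
    by_cases hb1 : b ≤ a + 1
    · have int1 : IntervalIntegrable (fun s => q₂ s * Real.exp (-ε * (b - s))) volume a b :=
        (hq₂int a b hτa hab).mul_continuousOn ((hcont b).continuousOn)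
      have h1 : (∫ s in a..b, q₂ s * Real.exp (-ε * (b - s))) ≤ ∫ s in a..b, q₂ s := by
        apply integral_mono_on hab int1 (hq₂int a b hτa hab)
        intro s hs
        have hq := hq₂nonneg s (hτa.trans hs.1)
        have : Real.exp (-ε * (b - s)) ≤ 1 := by
          rw [Real.exp_le_one_iff]; nlinarith [hs.2]
        nlinarith
      have h2 : (∫ s in a..b, q₂ s) ≤ ∫ s in a..(a+1), q₂ s := by
        rw [← intervalIntegral.integral_add_adjacent_intervals (hq₂int a b hτa hab)
          (hq₂int b (a+1) (hτa.trans hab) hb1)]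
        have h0 : 0 ≤ ∫ s in b..(a+1), q₂ s :=
          intervalIntegral.integral_nonneg hb1 (fun u hu => hq₂nonneg u ((hτa.trans hab).trans hu.1))
        linarith
      have h3 := hq₂bound a hτa
      have : c₂ ≤ c₂ / (1 - Real.exp (-ε)) := by
        rw [le_div_iff₀ hd]; nlinarith
      linarith
    · push_neg at hb1
      have hab1 : a ≤ b - 1 := by linarith
      have hτb1 : τ ≤ b - 1 := hτa.trans hab1
      have int1 : IntervalIntegrable (fun s => q₂ s * Real.exp (-ε * (b - s))) volume a (b-1) :=
        (hq₂int a (b-1) hτa hab1).mul_continuousOn ((hcont b).continuousOn)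
      have int2 : IntervalIntegrable (fun s => q₂ s * Real.exp (-ε * (b - s))) volume (b-1) b :=
        (hq₂int (b-1) b hτb1 (by linarith)).mul_continuousOn ((hcont b).continuousOn)
      rw [← intervalIntegral.integral_add_adjacent_intervals int1 int2]
      have p2 : (∫ s in (b-1)..b, q₂ s * Real.exp (-ε * (b - s))) ≤ c₂ := by
        have h1 : (∫ s in (b-1)..b, q₂ s * Real.exp (-ε * (b - s))) ≤ ∫ s in (b-1)..b, q₂ s := by
          apply integral_mono_on (by linarith) int2 (hq₂int (b-1) b hτb1 (by linarith))
          intro s hs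
          have hq := hq₂nonneg s (hτb1.trans hs.1)
          have : Real.exp (-ε * (b - s)) ≤ 1 := by
            rw [Real.exp_le_one_iff]; nlinarith [hs.2]
          nlinarith
        have h2 := hq₂bound (b-1) hτb1
        rw [show b - 1 + 1 = b by ring] at h2
        linarith
      have p1 : (∫ s in a..(b-1), q₂ s * Real.exp (-ε * (b - s)))
          ≤ (c₂ / (1 - Real.exp (-ε))) * Real.exp (-ε) := by
        have hrw : (∫ s in a..(b-1), q₂ s * Real.exp (-ε * (b - s)))
            = (∫ s in a..(b-1), q₂ s * Real.exp (-ε * ((b-1) - s))) * Real.exp (-ε) := by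
          rw [← intervalIntegral.integral_mul_const]
          apply intervalIntegral.integral_congr
          intro s _
          simp only [mul_assoc, ← Real.exp_add]
          ring_nf
        rw [hrw]
        apply mul_le_mul_of_nonneg_right _ he0.le
        exact ih a (b-1) hτa hab1 (by push_cast at hle ⊢; linarith)
      have : c₂ / (1 - Real.exp (-ε)) * Real.exp (-ε) + c₂ = c₂ / (1 - Real.exp (-ε)) := by
        field_simp
        ring
      linarith

set_option maxHeartbeats 2000000 in
/-- Gronwall-type lemma in integral form. -/
theorem gronwall_integral_form
    (τ : ℝ) (Λ : ℝ → ℝ) (hΛ : ContinuousOn Λ (Set.Ici τ))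
    (ε : ℝ) (hε : 0 < ε)
    (q₁ q₂ : ℝ → ℝ)
    (hq₁nonneg : ∀ y, τ ≤ y → 0 ≤ q₁ y) (hq₂nonneg : ∀ y, τ ≤ y → 0 ≤ q₂ y)
    (hq₁int : ∀ a b : ℝ, τ ≤ a → a ≤ b → IntervalIntegrable q₁ volume a b)
    (hq₂int : ∀ a b : ℝ, τ ≤ a → a ≤ b → IntervalIntegrable q₂ volume a b)
    (c₁ c₂ : ℝ) (hc₁ : 0 ≤ c₁) (hc₂ : 0 ≤ c₂)
    (hmain : ∀ a b : ℝ, τ ≤ a → a < b →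
      Λ b + 2 * ε * ∫ y in a..b, Λ y ≤
        Λ a + (∫ y in a..b, q₁ y * Λ y) + ∫ y in a..b, q₂ y)
    (hq₁bound : ∀ a b : ℝ, τ ≤ a → a < b → (∫ y in a..b, q₁ y) ≤ ε * (b - a) + c₁)
    (hq₂bound : ∀ t : ℝ, τ ≤ t → (∫ y in t..(t+1), q₂ y) ≤ c₂) :
    ∀ t : ℝ, τ ≤ t →
      Λ t ≤ Real.exp c₁ *
        (|Λ τ| * Real.exp (-ε * (t - τ)) + c₂ * Real.exp ε / (1 - Real.exp (-ε))) := by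
  have he1 : Real.exp (-ε) < 1 := by rw [Real.exp_lt_one_iff]; linarith
  have hd : 0 < 1 - Real.exp (-ε) := by linarith
  have hK : 0 ≤ c₂ * Real.exp ε / (1 - Real.exp (-ε)) :=
    div_nonneg (mul_nonneg hc₂ (Real.exp_pos _).le) hd.le
  have hec₁ : 1 ≤ Real.exp c₁ := Real.one_le_exp hc₁
  intro t ht
  rcases eq_or_lt_of_le ht with rfl | htlt
  · -- trivial case t = τ
    have h1 : Λ τ ≤ |Λ τ| := le_abs_self _
    have h2 : Real.exp (-ε * (τ - τ)) = 1 := by norm_num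
    rw [h2]
    nlinarith [abs_nonneg (Λ τ), Real.exp_pos c₁]
  · -- main case
    set L : ℝ := t - τ with hLdef
    have hL : 0 < L := by rw [hLdef]; linarith
    apply le_of_forall_pos_le_add
    intro η hη
    set C : ℝ := Real.exp c₁ * (3 * ε * L + c₁) + 1 with hCdef
    have hC : 0 < C := by positivity
    set η' : ℝ := η / C with hη'def
    have hη' : 0 < η' := by positivity
    -- uniform continuity
    have hUC := (isCompact_Icc : IsCompact (Set.Icc τ t)).uniformContinuousOn_of_continuous
      (hΛ.mono (fun y hy => hy.1))
    rw [Metric.uniformContinuousOn_iff] at hUC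
    obtain ⟨δ, hδ, hUC⟩ := hUC η' hη'
    -- choose n
    set d0 : ℝ := min δ (min 1 (1 / (2 * ε))) with hd0def
    have hd0 : 0 < d0 := by
      apply lt_min hδ
      apply lt_min one_pos
      positivity
    obtain ⟨n, hn⟩ := exists_nat_gt (L / d0)
    have hn0 : 0 < (n : ℝ) := lt_trans (by positivity) hn
    have hnn : 0 < n := by exact_mod_cast hn0
    set h : ℝ := L / n with hhdef
    have hh0 : 0 < h := by positivity
    have hhd0 : h < d0 := by
      rw [hhdef, div_lt_iff₀ hn0]
      calc L = (L / d0) * d0 := by field_simp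
        _ < n * d0 := by exact mul_lt_mul_of_pos_right hn hd0
        _ = d0 * n := mul_comm _ _
    have hhδ : h < δ := lt_of_lt_of_le hhd0 (min_le_left _ _)
    have hh1 : h ≤ 1 := le_trans hhd0.le (le_trans (min_le_right _ _) (min_le_left _ _))
    have hh2ε : 2 * ε * h ≤ 1 := by
      have : h ≤ 1 / (2 * ε) := le_trans hhd0.le (le_trans (min_le_right _ _) (min_le_right _ _))
      rw [le_div_iff₀ (by positivity : (0:ℝ) < 2 * ε)] at this
      linarith
    have hnh : (n : ℝ) * h = L := by rw [hhdef]; field_simp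
    -- the partition
    set T : ℕ → ℝ := fun i => τ + i * h with hTdef
    have hT0 : T 0 = τ := by simp [hTdef]
    have hTn : T n = t := by
      simp only [hTdef]
      rw [hnh]
      simp [hLdef]
    have hstep : ∀ i : ℕ, T (i+1) - T i = h := by
      intro i; simp only [hTdef]; push_cast; ring
    have hTmono : ∀ i : ℕ, T i ≤ T (i+1) := fun i => by
      have := hstep i; linarith
    have hTlt : ∀ i : ℕ, T i < T (i+1) := fun i => by
      have := hstep i; linarith
    have hτT : ∀ i : ℕ, τ ≤ T i := by
      intro i
      simp only [hTdef]
      have : 0 ≤ (i : ℝ) * h := by positivity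
      linarith
    have hTt : ∀ i : ℕ, i ≤ n → T i ≤ t := by
      intro i hi
      have : (i : ℝ) * h ≤ (n : ℝ) * h := by
        apply mul_le_mul_of_nonneg_right _ hh0.le
        exact_mod_cast hi
      simp only [hTdef]
      rw [hnh] at this
      simp only [hLdef] at this
      linarith
    have hTlt_t : ∀ i : ℕ, i < n → T i < t := by
      intro i hi
      calc T i < T (i+1) := hTlt i
        _ ≤ t := hTt (i+1) hi
    -- continuity on subintervals
    have hΛsub : ∀ i : ℕ, i < n → ContinuousOn Λ (Set.uIcc (T i) (T (i+1))) := by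
      intro i hi
      apply hΛ.mono
      rw [Set.uIcc_of_le (hTmono i)]
      intro y hy
      exact (hτT i).trans hy.1
    have hΛint : ∀ i : ℕ, i < n → IntervalIntegrable Λ volume (T i) (T (i+1)) := fun i hi =>
      (hΛsub i hi).intervalIntegrable
    -- discrete data
    set p : ℕ → ℝ := fun i => 1 + ∫ y in T i..T (i+1), (q₁ y - 2*ε) with hpdef
    set qq : ℕ → ℝ := fun i => (∫ y in T i..T (i+1), q₂ y)
      + η' * ((∫ y in T i..T (i+1), q₁ y) + 2*ε*h) with hqqdef
    have hPsplit : ∀ i : ℕ, (∫ y in T i..T (i+1), (q₁ y - 2*ε))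
        = (∫ y in T i..T (i+1), q₁ y) - 2*ε*h := by
      intro i
      rw [intervalIntegral.integral_sub (hq₁int _ _ (hτT i) (hTmono i)) intervalIntegrable_const,
        intervalIntegral.integral_const, smul_eq_mul, hstep i]
      ring
    have hG0 : ∀ i : ℕ, 0 ≤ ∫ y in T i..T (i+1), q₁ y := by
      intro i
      exact intervalIntegral.integral_nonneg (hTmono i)
        (fun u hu => hq₁nonneg u ((hτT i).trans hu.1))
    have hQ0 : ∀ i : ℕ, 0 ≤ ∫ y in T i..T (i+1), q₂ y := by
      intro i
      exact intervalIntegral.integral_nonneg (hTmono i)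
        (fun u hu => hq₂nonneg u ((hτT i).trans hu.1))
    have hp0 : ∀ i, i < n → 0 ≤ p i := by
      intro i _
      simp only [hpdef]
      rw [hPsplit i]
      have := hG0 i
      linarith
    -- the step inequality
    have hx : ∀ i, i < n → Λ (T (i+1)) ≤ p i * Λ (T i) + qq i := by
      intro i hi
      have hτi := hτT i
      have hii := hTmono i
      have iq₁ := hq₁int _ _ hτi hii
      have iq₂ := hq₂int _ _ hτi hii
      have iΛ := hΛint i hi
      have iq₁Λ : IntervalIntegrable (fun y => q₁ y * Λ y) volume (T i) (T (i+1)) :=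
        iq₁.mul_continuousOn (hΛsub i hi)
      have hm := hmain (T i) (T (i+1)) hτi (hTlt i)
      -- error estimate
      have e1 : (∫ y in T i..T (i+1), (q₁ y - 2*ε) * (Λ y - Λ (T i)))
          ≤ η' * ((∫ y in T i..T (i+1), q₁ y) + 2*ε*h) := by
        have intl : IntervalIntegrable (fun y => (q₁ y - 2*ε) * (Λ y - Λ (T i)))
            volume (T i) (T (i+1)) :=
          (iq₁.sub intervalIntegrable_const).mul_continuousOn
            ((hΛsub i hi).sub continuousOn_const)
        have intr : IntervalIntegrable (fun y => η' * (q₁ y + 2*ε)) volume (T i) (T (i+1)) :=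
          (iq₁.add intervalIntegrable_const).const_mul η'
        have mono := integral_mono_on hii intl intr ?_
        · rw [intervalIntegral.integral_const_mul,
            intervalIntegral.integral_add iq₁ intervalIntegrable_const,
            intervalIntegral.integral_const, smul_eq_mul, hstep i] at mono
          linarith [mono]
        · intro y hy
          have hyτ : τ ≤ y := hτi.trans hy.1
          have hymem : y ∈ Set.Icc τ t := ⟨hyτ, hy.2.trans (hTt (i+1) hi)⟩
          have hTimem : T i ∈ Set.Icc τ t := ⟨hτi, hTt i hi.le⟩
          have hdist : dist (T i) y < δ := by
            rw [Real.dist_eq, abs_sub_comm, abs_of_nonneg (by linarith [hy.1])]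
            have := hstep i
            have := hy.2
            linarith
          have habs : |Λ y - Λ (T i)| ≤ η' := by
            have := hUC (T i) hTimem y hymem hdist
            rw [Real.dist_eq, abs_sub_comm] at this
            exact this.le
          have hq1y := hq₁nonneg y hyτ
          have habs2 : |q₁ y - 2*ε| ≤ q₁ y + 2*ε :=
            abs_le.mpr ⟨by linarith, by linarith⟩
          calc (q₁ y - 2*ε) * (Λ y - Λ (T i))
              ≤ |(q₁ y - 2*ε) * (Λ y - Λ (T i))| := le_abs_self _
            _ = |q₁ y - 2*ε| * |Λ y - Λ (T i)| := abs_mul _ _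
            _ ≤ (q₁ y + 2*ε) * η' := mul_le_mul habs2 habs (abs_nonneg _) (by positivity)
            _ = η' * (q₁ y + 2*ε) := mul_comm _ _
      -- rewrite identities
      have f1 : (∫ y in T i..T (i+1), (q₁ y - 2*ε) * Λ y)
          = (∫ y in T i..T (i+1), q₁ y * Λ y) - 2*ε*(∫ y in T i..T (i+1), Λ y) := by
        have : ∀ y ∈ Set.uIcc (T i) (T (i+1)), (q₁ y - 2*ε) * Λ y
            = q₁ y * Λ y - (2*ε) * Λ y := by intro y _; ring
        rw [intervalIntegral.integral_congr this,
          intervalIntegral.integral_sub iq₁Λ (iΛ.const_mul (2*ε)),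
          intervalIntegral.integral_const_mul]
      have f2 : (∫ y in T i..T (i+1), (q₁ y - 2*ε) * (Λ y - Λ (T i)))
          = (∫ y in T i..T (i+1), (q₁ y - 2*ε) * Λ y)
            - (∫ y in T i..T (i+1), (q₁ y - 2*ε)) * Λ (T i) := by
        have hc : ∀ y ∈ Set.uIcc (T i) (T (i+1)), (q₁ y - 2*ε) * (Λ y - Λ (T i))
            = (q₁ y - 2*ε) * Λ y - (q₁ y - 2*ε) * Λ (T i) := by intro y _; ring
        rw [intervalIntegral.integral_congr hc,
          intervalIntegral.integral_sub
            ((iq₁.sub intervalIntegrable_const).mul_continuousOn (hΛsub i hi))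
            ((iq₁.sub intervalIntegrable_const).mul_const _),
          intervalIntegral.integral_mul_const]
      simp only [hpdef, hqqdef]
      have e2 := e1
      rw [f2, f1] at e2
      linarith [hm, e2]
    -- apply discrete lemma
    have main := discrete_gronwall_aux (fun i => Λ (T i)) p qq n hp0 hx
    simp only at main
    rw [hTn, hT0] at main
    -- product bounds
    have hprod : ∀ i : ℕ, i ≤ n → (∏ j ∈ Finset.Ico i n, p j)
        ≤ Real.exp c₁ * Real.exp (-ε * (t - T i)) := by
      intro i hi
      rcases eq_or_lt_of_le hi with rfl | hilt
      · rw [Finset.Ico_self, Finset.prod_empty, hTn]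
        simp
        nlinarith [Real.exp_pos c₁]
      · have step1 : (∏ j ∈ Finset.Ico i n, p j)
            ≤ ∏ j ∈ Finset.Ico i n, Real.exp (∫ y in T j..T (j+1), (q₁ y - 2*ε)) := by
          apply Finset.prod_le_prod
          · intro j hj
            exact hp0 j (Finset.mem_Ico.mp hj).2
          · intro j hj
            simp only [hpdef]
            rw [add_comm]
            exact Real.add_one_le_exp _
        have step2 : (∏ j ∈ Finset.Ico i n, Real.exp (∫ y in T j..T (j+1), (q₁ y - 2*ε)))
            = Real.exp (∑ j ∈ Finset.Ico i n, ∫ y in T j..T (j+1), (q₁ y - 2*ε)) :=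
          (Real.exp_sum _ _).symm
        have step3 : (∑ j ∈ Finset.Ico i n, ∫ y in T j..T (j+1), (q₁ y - 2*ε))
            = ∫ y in T i..T n, (q₁ y - 2*ε) := by
          apply intervalIntegral.sum_integral_adjacent_intervals_Ico hi
          intro k hk
          exact (hq₁int _ _ (hτT k) (hTmono k)).sub intervalIntegrable_const
        have step4 : (∫ y in T i..T n, (q₁ y - 2*ε)) ≤ c₁ - ε * (t - T i) := by
          rw [hTn]
          have hq := hq₁bound (T i) t (hτT i) (hTlt_t i hilt)
          rw [intervalIntegral.integral_sub (hq₁int _ _ (hτT i) ((hTt i hi).trans (le_refl t)))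
            intervalIntegrable_const, intervalIntegral.integral_const, smul_eq_mul]
          linarith
        calc (∏ j ∈ Finset.Ico i n, p j)
            ≤ Real.exp (∫ y in T i..T n, (q₁ y - 2*ε)) := by rw [← step3, ← step2]; exact step1
          _ ≤ Real.exp (c₁ - ε * (t - T i)) := Real.exp_le_exp.mpr step4
          _ = Real.exp c₁ * Real.exp (-ε * (t - T i)) := by
              rw [← Real.exp_add]; ring_nf
    -- term 1
    have hprnn : 0 ≤ ∏ i ∈ Finset.range n, p i :=
      Finset.prod_nonneg (fun j hj => hp0 j (Finset.mem_range.mp hj))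
    have hpr0 : (∏ i ∈ Finset.range n, p i) ≤ Real.exp c₁ * Real.exp (-ε * (t - τ)) := by
      have hz := hprod 0 (Nat.zero_le n)
      rw [hT0] at hz
      rw [Finset.range_eq_Ico]
      exact hz
    have term1 : (∏ i ∈ Finset.range n, p i) * Λ τ
        ≤ Real.exp c₁ * Real.exp (-ε * (t - τ)) * |Λ τ| := by
      calc (∏ i ∈ Finset.range n, p i) * Λ τ
          ≤ (∏ i ∈ Finset.range n, p i) * |Λ τ| :=
            mul_le_mul_of_nonneg_left (le_abs_self _) hprnn
        _ ≤ Real.exp c₁ * Real.exp (-ε * (t - τ)) * |Λ τ| :=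
            mul_le_mul_of_nonneg_right hpr0 (abs_nonneg _)
    -- per-i bound for the sum
    have hsum1 : ∀ i ∈ Finset.range n,
        (∏ j ∈ Finset.Ico (i+1) n, p j) * qq i
          ≤ Real.exp c₁ * (Real.exp (-ε * (t - T (i+1))) * (∫ y in T i..T (i+1), q₂ y))
            + (Real.exp c₁ * η') * ((∫ y in T i..T (i+1), q₁ y) + 2*ε*h) := by
      intro i hi
      have hi' := Finset.mem_range.mp hi
      have hPr := hprod (i+1) hi'
      have hPrnn : 0 ≤ ∏ j ∈ Finset.Ico (i+1) n, p j :=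
        Finset.prod_nonneg (fun j hj => hp0 j (Finset.mem_Ico.mp hj).2)
      have hexple : Real.exp (-ε * (t - T (i+1))) ≤ 1 := by
        rw [Real.exp_le_one_iff]
        have := hTt (i+1) hi'
        nlinarith
      have hPr1 : (∏ j ∈ Finset.Ico (i+1) n, p j) ≤ Real.exp c₁ := by
        calc (∏ j ∈ Finset.Ico (i+1) n, p j)
            ≤ Real.exp c₁ * Real.exp (-ε * (t - T (i+1))) := hPr
          _ ≤ Real.exp c₁ * 1 := mul_le_mul_of_nonneg_left hexple (Real.exp_pos _).le
          _ = Real.exp c₁ := mul_one _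
      have hQ := hQ0 i
      have hG := hG0 i
      have hs2 : 0 ≤ ((∫ y in T i..T (i+1), q₁ y) + 2*ε*h) := by nlinarith
      simp only [hqqdef]
      nlinarith [mul_le_mul_of_nonneg_right hPr hQ,
        mul_le_mul_of_nonneg_right hPr1 (mul_nonneg hη'.le hs2), hη'.le]
    have hsum_le := Finset.sum_le_sum hsum1
    rw [Finset.sum_add_distrib, ← Finset.mul_sum, ← Finset.mul_sum] at hsum_le
    -- bound sum B (error terms)
    have sumG : (∑ i ∈ Finset.range n, ∫ y in T i..T (i+1), q₁ y) = ∫ y in τ..t, q₁ y := by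
      rw [Finset.range_eq_Ico,
        intervalIntegral.sum_integral_adjacent_intervals_Ico (Nat.zero_le n)
          (fun k _ => hq₁int _ _ (hτT k) (hTmono k)), hT0, hTn]
    have sumB : (∑ i ∈ Finset.range n, ((∫ y in T i..T (i+1), q₁ y) + 2*ε*h))
        = (∫ y in τ..t, q₁ y) + 2*ε*L := by
      rw [Finset.sum_add_distrib, sumG, Finset.sum_const, Finset.card_range, nsmul_eq_mul]
      have hh : (n:ℝ) * (2*ε*h) = 2*ε*L := by rw [← hnh]; ring
      rw [hh]
    have hq1t := hq₁bound τ t (le_refl τ) htlt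
    have sumBle : (∑ i ∈ Finset.range n, ((∫ y in T i..T (i+1), q₁ y) + 2*ε*h))
        ≤ 3*ε*L + c₁ := by
      rw [sumB, hLdef]
      linarith
    -- bound sum A (q₂ decay terms)
    obtain ⟨N, hNt⟩ := exists_nat_ge (t - τ)
    have decay := decay_integral_bound τ ε hε q₂ hq₂nonneg hq₂int c₂ hc₂ hq₂bound N τ t
      (le_refl τ) ht (by linarith)
    have sumAsplit : (∑ i ∈ Finset.range n, ∫ s in T i..T (i+1), q₂ s * Real.exp (-ε * (t - s)))
        = ∫ s in τ..t, q₂ s * Real.exp (-ε * (t - s)) := by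
      rw [Finset.range_eq_Ico,
        intervalIntegral.sum_integral_adjacent_intervals_Ico (Nat.zero_le n)
          (fun k _ => (hq₂int _ _ (hτT k) (hTmono k)).mul_continuousOn
            (Continuous.continuousOn (by fun_prop))), hT0, hTn]
    have hA1 : ∀ i ∈ Finset.range n,
        Real.exp (-ε * (t - T (i+1))) * (∫ y in T i..T (i+1), q₂ y)
          ≤ Real.exp ε * ∫ s in T i..T (i+1), q₂ s * Real.exp (-ε * (t - s)) := by
      intro i hi
      have hi' := Finset.mem_range.mp hi
      have iq₂ := hq₂int _ _ (hτT i) (hTmono i)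
      have intr : IntervalIntegrable (fun s => Real.exp ε * (q₂ s * Real.exp (-ε * (t - s))))
          volume (T i) (T (i+1)) :=
        ((iq₂.mul_continuousOn (Continuous.continuousOn (by fun_prop))).const_mul _)
      have intl : IntervalIntegrable (fun s => q₂ s * Real.exp (-ε * (t - T (i+1))))
          volume (T i) (T (i+1)) := iq₂.mul_const _
      have mono := integral_mono_on (hTmono i) intl intr ?_
      · rw [intervalIntegral.integral_mul_const, intervalIntegral.integral_const_mul] at mono
        rw [mul_comm]
        exact mono
      · intro s hs
        have hq := hq₂nonneg s ((hτT i).trans hs.1)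
        have hle : Real.exp (-ε * (t - T (i+1))) ≤ Real.exp ε * Real.exp (-ε * (t - s)) := by
          rw [← Real.exp_add, Real.exp_le_exp]
          have h1 := hs.1
          have h2 := hstep i
          nlinarith [hh1, hε.le]
        calc q₂ s * Real.exp (-ε * (t - T (i+1)))
            ≤ q₂ s * (Real.exp ε * Real.exp (-ε * (t - s))) :=
              mul_le_mul_of_nonneg_left hle hq
          _ = Real.exp ε * (q₂ s * Real.exp (-ε * (t - s))) := by ring
    have sumA : (∑ i ∈ Finset.range n,
          Real.exp (-ε * (t - T (i+1))) * (∫ y in T i..T (i+1), q₂ y))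
        ≤ Real.exp ε * (c₂ / (1 - Real.exp (-ε))) := by
      calc (∑ i ∈ Finset.range n,
            Real.exp (-ε * (t - T (i+1))) * (∫ y in T i..T (i+1), q₂ y))
          ≤ ∑ i ∈ Finset.range n,
              Real.exp ε * ∫ s in T i..T (i+1), q₂ s * Real.exp (-ε * (t - s)) :=
            Finset.sum_le_sum hA1
        _ = Real.exp ε * ∫ s in τ..t, q₂ s * Real.exp (-ε * (t - s)) := by
            rw [← Finset.mul_sum, sumAsplit]
        _ ≤ Real.exp ε * (c₂ / (1 - Real.exp (-ε))) :=
            mul_le_mul_of_nonneg_left decay (Real.exp_pos _).le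
    -- the η-budget
    have hfin : (Real.exp c₁ * η') * (3*ε*L + c₁) ≤ η := by
      have h1 : Real.exp c₁ * (3*ε*L + c₁) ≤ C := by rw [hCdef]; linarith
      have h2 : η' * (Real.exp c₁ * (3*ε*L + c₁)) ≤ η' * C :=
        mul_le_mul_of_nonneg_left h1 hη'.le
      have h3 : η' * C = η := by rw [hη'def]; field_simp
      nlinarith
    -- put everything together
    have hB1 : Real.exp c₁ * (∑ i ∈ Finset.range n,
          Real.exp (-ε * (t - T (i+1))) * (∫ y in T i..T (i+1), q₂ y))
        ≤ Real.exp c₁ * (Real.exp ε * (c₂ / (1 - Real.exp (-ε)))) :=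
      mul_le_mul_of_nonneg_left sumA (Real.exp_pos _).le
    have hB2 : (Real.exp c₁ * η') * (∑ i ∈ Finset.range n,
          ((∫ y in T i..T (i+1), q₁ y) + 2*ε*h))
        ≤ (Real.exp c₁ * η') * (3*ε*L + c₁) :=
      mul_le_mul_of_nonneg_left sumBle (by positivity)
    have ering : Real.exp c₁ * (Real.exp ε * (c₂ / (1 - Real.exp (-ε))))
        = Real.exp c₁ * (c₂ * Real.exp ε / (1 - Real.exp (-ε))) := by ring
    have ering2 : Real.exp c₁ * Real.exp (-ε * (t - τ)) * |Λ τ|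
        = Real.exp c₁ * (|Λ τ| * Real.exp (-ε * L)) := by rw [hLdef]; ring
    linarith [main, term1, hsum_le, hB1, hB2, hfin]
end

section
/- With μ_t(s) = ε(t)^{−2} e^{−s/ε(t)}, ε(t) = (1/4)(π/2 − arctan t): there exists δ > 0 such that ∂_t μ_t(s) + ∂_s μ_t(s) + δ κ(t) μ_t(s) ≤ 0 for all t ∈ ℝ and s > 0, where κ(t) = 1/ε(t). -/
open Real

/-! For `μ_t(s) = ε(t)⁻² e^{-s/ε(t)}` one has `∂_s μ = -μ/ε` and `∂_t μ = ε' (s - 2ε) ε⁻² μ`, so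
`∂_t μ + ∂_s μ + δ μ/ε = (μ/ε) (ε' s/ε + δ - 1 - 2ε')`. For a decreasing scale with
`ε' ≥ -(1 - δ)/2` and `s ≥ 0` the bracket is nonpositive. The scale `ε = (π/2 - arctan)/4` has
`ε' = -1/(4(1 + t²)) ∈ [-1/4, 0)`, so `δ = 1/2` works. -/

noncomputable def expKernel (ε : ℝ → ℝ) (t s : ℝ) : ℝ :=
  exp (-s / ε t) / ε t ^ 2

section expKernel

variable {ε : ℝ → ℝ} {ε' t : ℝ}

theorem expKernel_pos (hεt : 0 < ε t) (s : ℝ) : 0 < expKernel ε t s := by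
  unfold expKernel
  positivity

theorem hasDerivAt_expKernel_time (s : ℝ) (hε : HasDerivAt ε ε' t) (hεt : ε t ≠ 0) :
    HasDerivAt (fun r => expKernel ε r s) (ε' * (s - 2 * ε t) / ε t ^ 2 * expKernel ε t s) t := by
  have hexp := ((hasDerivAt_const t (-s)).div hε hεt).exp
  refine (hexp.div (hε.pow 2) (pow_ne_zero 2 hεt)).congr_deriv ?_
  simp only [expKernel, Pi.div_apply, Pi.pow_apply]
  field_simp
  ring

theorem hasDerivAt_expKernel_space (ε : ℝ → ℝ) (t s : ℝ) :
    HasDerivAt (fun r => expKernel ε t r) (-expKernel ε t s / ε t) s := by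
  refine ((((hasDerivAt_id s).neg.div_const (ε t)).exp).div_const (ε t ^ 2)).congr_deriv ?_
  simp only [expKernel, Pi.neg_apply, id]
  ring

theorem deriv_expKernel_add_nonpos {δ s : ℝ} (hε : HasDerivAt ε ε' t) (hεt : 0 < ε t) (hε' : ε' ≤ 0)
    (hδ : δ ≤ 1 + 2 * ε') (hs : 0 ≤ s) :
    deriv (fun r => expKernel ε r s) t + deriv (fun r => expKernel ε t r) s
      + δ * (1 / ε t) * expKernel ε t s ≤ 0 := by
  rw [(hasDerivAt_expKernel_time s hε hεt.ne').deriv, (hasDerivAt_expKernel_space ε t s).deriv]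
  have hfactor : ε' * (s - 2 * ε t) / ε t ^ 2 * expKernel ε t s - expKernel ε t s / ε t
      + δ * (1 / ε t) * expKernel ε t s
      = expKernel ε t s / ε t * (ε' * s / ε t + (δ - 1 - 2 * ε')) := by
    field_simp
    ring
  rw [neg_div, ← sub_eq_add_neg, hfactor]
  refine mul_nonpos_of_nonneg_of_nonpos (div_pos (expKernel_pos hεt s) hεt).le
    (add_nonpos ?_ (by linarith))
  exact div_nonpos_of_nonpos_of_nonneg (mul_nonpos_of_nonpos_of_nonneg hε' hs) hεt.le

end expKernel

noncomputable def arctanScale (t : ℝ) : ℝ :=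
  (π / 2 - arctan t) / 4

theorem arctanScale_pos (t : ℝ) : 0 < arctanScale t := by
  have := arctan_lt_pi_div_two t
  unfold arctanScale
  linarith

theorem hasDerivAt_arctanScale (t : ℝ) :
    HasDerivAt arctanScale (-(1 / (1 + t ^ 2)) / 4) t := by
  refine (((hasDerivAt_const t (π / 2)).sub (hasDerivAt_arctan t)).div_const 4).congr_deriv ?_
  ring

theorem one_div_one_add_sq_le_one (t : ℝ) : 1 / (1 + t ^ 2) ≤ 1 :=
  div_le_one_of_le₀ (by nlinarith [sq_nonneg t]) (by positivity)

/-- Condition (M₄) for the example kernel `μ_t(s) = ε(t)^{−2} e^{−s/ε(t)}`,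
`ε(t) = (1/4)(π/2 − arctan t)`: there exists `δ > 0` with
`∂_t μ_t(s) + ∂_s μ_t(s) + δ κ(t) μ_t(s) ≤ 0` for all `t` and `s > 0`, where `κ(t) = 1/ε(t)`. -/
theorem example_kernel_M4
    (e : ℝ → ℝ) (μ : ℝ → ℝ → ℝ)
    (he : ∀ t, e t = (π / 2 - Real.arctan t) / 4)
    (hμ : ∀ t s, μ t s = Real.exp (-s / e t) / (e t) ^ 2) :
    ∃ δ > 0, ∀ t : ℝ, ∀ s : ℝ, 0 < s →
      deriv (fun r : ℝ => μ r s) t + deriv (fun r : ℝ => μ t r) s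
        + δ * (1 / e t) * μ t s ≤ 0 := by
  obtain rfl : e = arctanScale := funext he
  obtain rfl : μ = expKernel arctanScale := funext fun t => funext (hμ t)
  refine ⟨1 / 2, one_half_pos, fun t s hs => ?_⟩
  have hc := one_div_one_add_sq_le_one t
  have hc_pos : 0 < 1 / (1 + t ^ 2) := by positivity
  exact deriv_expKernel_add_nonpos (hasDerivAt_arctanScale t) (arctanScale_pos t) (by linarith) (by linarith)
    hs.le
end
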